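/- arXiv:1408.3342 — 5 statements merged into one kernel-verified Lean document; each statement's English description precedes it below -/
import Mathlib

section
/- Let q be a prime power, k an even integer, i ≥ 0 an integer, and t = (q−1)k/2 − i(q+1) ≥ 0. Define an F_q-linear map φ from homogeneous polynomials of degree t in X,Y over F_q to F_q(z) by φ(F) = F(z,1)·(z − z^q)^{i − k/2}. Then for every γ = [[a,b],[c,d]] ∈ GL₂(F_q), φ((ad−bc)^{i−k/2} F(dX+bY, cX+aY)) = (a+cz)^{-k} · (φF)((b+dz)/(a+cz)); that is, φ intertwines the twisted symmetric-power action with the weight-k slash action on rational functions. -/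
/-
Dehomogenising `γ.F` at `(z, 1)` gives `(a + cz)^t F(w, 1)` with `w = (b + dz)/(a + cz)`, by
homogeneity of degree `t`. Since `x ↦ x^q` fixes `F_q`, it is a ring map on `F_q(z)` and
`w - w^q = det γ · (z - z^q)/(a + cz)^(q+1)`. As `w` is transcendental, substituting `w` for `z`
is a ring homomorphism, so `φ F` becomes `F(w, 1) (w - w^q)^s`, and the degree condition
`t = -k - (q+1)s` is exactly what makes the powers of `a + cz` on both sides agree.
-/
open Matrix MvPolynomial

/-- The twisted symmetric-power action `γ.F = (ad-bc)^s F(dX+bY, cX+aY)`. -/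
noncomputable def symAct {A : Type*} [CommRing A] (s : ℤ) (γ : GL (Fin 2) A)
    (F : MvPolynomial (Fin 2) A) : MvPolynomial (Fin 2) A :=
  (((Matrix.GeneralLinearGroup.det γ) ^ s : Aˣ) : A) •
    aeval ![C ((γ : Matrix (Fin 2) (Fin 2) A) 1 1) * X 0 +
              C ((γ : Matrix (Fin 2) (Fin 2) A) 0 1) * X 1,
            C ((γ : Matrix (Fin 2) (Fin 2) A) 1 0) * X 0 +
              C ((γ : Matrix (Fin 2) (Fin 2) A) 0 0) * X 1] F

theorem MvPolynomial.IsHomogeneous.aeval_mul_left {R S σ : Type*} [CommSemiring R]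
    [CommSemiring S] [Algebra R S] {P : MvPolynomial σ R} {n : ℕ} (hP : P.IsHomogeneous n)
    (r : S) (v : σ → S) :
    MvPolynomial.aeval (fun j => r * v j) P = r ^ n * MvPolynomial.aeval v P := by
  simp only [MvPolynomial.aeval_def, eval₂_eq, Finset.mul_sum]
  refine Finset.sum_congr rfl fun d hd => ?_
  have hdeg : ∑ j ∈ d.support, d j = n := by
    simpa [Finsupp.weight_apply, Finsupp.sum] using hP (mem_support_iff.mp hd)
  rw [Finset.prod_congr rfl fun j _ => mul_pow r (v j) (d j), Finset.prod_mul_distrib,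
    Finset.prod_pow_eq_pow_sum, hdeg]
  ring

theorem aeval_symAct {A S : Type*} [CommRing A] [CommRing S] [Algebra A S] (s : ℤ)
    (γ : GL (Fin 2) A) (P : MvPolynomial (Fin 2) A) (x y : S) :
    aeval ![x, y] (symAct s γ P) =
      algebraMap A S ((Matrix.GeneralLinearGroup.det γ ^ s : Aˣ) : A) *
        aeval ![algebraMap A S ((γ : Matrix (Fin 2) (Fin 2) A) 1 1) * x +
                  algebraMap A S ((γ : Matrix (Fin 2) (Fin 2) A) 0 1) * y,
                algebraMap A S ((γ : Matrix (Fin 2) (Fin 2) A) 1 0) * x +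
                  algebraMap A S ((γ : Matrix (Fin 2) (Fin 2) A) 0 0) * y] P := by
  rw [symAct, smul_eq_C_mul, map_mul, aeval_C, comp_aeval_apply]
  congr 3
  funext j
  fin_cases j <;> simp

theorem Transcendental.eq_zero_of_add_mul_eq_zero {K L : Type*} [CommRing K] [CommRing L]
    [Algebra K L] {z : L} (hz : Transcendental K z) {a c : K}
    (h : algebraMap K L a + algebraMap K L c * z = 0) : a = 0 ∧ c = 0 := by
  have hpoly : Polynomial.C a + Polynomial.C c * Polynomial.X = 0 :=
    transcendental_iff.mp hz _ (by simpa using h)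
  exact ⟨by simpa using congrArg (Polynomial.coeff · 0) hpoly,
    by simpa using congrArg (Polynomial.coeff · 1) hpoly⟩

universe u

namespace RatFunc

variable {K : Type u} [Field K]

theorem C_add_C_mul_X_eq_zero_iff {a c : K} : C a + C c * X = 0 ↔ a = 0 ∧ c = 0 := by
  refine ⟨fun h => transcendental_X.eq_zero_of_add_mul_eq_zero ?_, ?_⟩
  · simpa only [algebraMap_eq_C] using h
  · rintro ⟨rfl, rfl⟩
    simp

theorem C_add_C_mul_X_ne_zero_of_det_ne_zero {a b c d : K} (h : a * d - b * c ≠ 0) :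
    C a + C c * X ≠ 0 := by
  rw [Ne, C_add_C_mul_X_eq_zero_iff]
  rintro ⟨rfl, rfl⟩
  simp at h

theorem transcendental_moebius {a b c d : K} (h : a * d - b * c ≠ 0) :
    Transcendental K ((C b + C d * X) / (C a + C c * X)) := by
  refine transcendental_of_ne_C _ fun ⟨e, he⟩ => h ?_
  rw [div_eq_iff (C_add_C_mul_X_ne_zero_of_det_ne_zero h)] at he
  obtain ⟨hb, hd⟩ : b - e * a = 0 ∧ d - e * c = 0 := C_add_C_mul_X_eq_zero_iff.mp <| by
    rw [map_sub, map_sub, map_mul, map_mul, ← sub_eq_zero.mpr he]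
    ring
  linear_combination a * hd - c * hb

variable {L : Type u} [Field L] [Algebra K L]

/-- `RatFunc.eval` is multiplicative away from poles, and a transcendental point is a pole of
no rational function. -/
noncomputable def evalAlgHom (w : L) (hw : Transcendental K w) : RatFunc K →ₐ[K] L :=
  liftAlgHom (Polynomial.aeval w) <|
    nonZeroDivisors_le_comap_nonZeroDivisors_of_injective _ (transcendental_iff_injective.mp hw)

theorem evalAlgHom_apply (w : L) (hw : Transcendental K w) (f : RatFunc K) :
    evalAlgHom w hw f = RatFunc.eval (algebraMap K L) w f := by
  simp only [evalAlgHom, liftAlgHom_apply, eval, Polynomial.aeval_def]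

@[simp]
theorem evalAlgHom_X (w : L) (hw : Transcendental K w) : evalAlgHom w hw X = w := by
  rw [evalAlgHom_apply, eval_X]

theorem eval_aeval_mul_zpow_X_sub_X_pow {w : L} (hw : Transcendental K w)
    (P : MvPolynomial (Fin 2) K) (n : ℕ) (s : ℤ) :
    eval (algebraMap K L) w (aeval ![X, (1 : RatFunc K)] P * (X - X ^ n) ^ s) =
      aeval ![w, 1] P * (w - w ^ n) ^ s := by
  rw [← evalAlgHom_apply w hw, map_mul, map_zpow₀, map_sub, map_pow, comp_aeval_apply,
    evalAlgHom_X]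
  congr 3
  funext j
  fin_cases j <;> simp

end RatFunc

theorem FiniteField.moebius_sub_pow_card {K L : Type*} [Field K] [Fintype K] [Field L]
    [Algebra K L] (a b c d : K) (z : L)
    (hD : algebraMap K L a + algebraMap K L c * z ≠ 0) :
    (algebraMap K L b + algebraMap K L d * z) / (algebraMap K L a + algebraMap K L c * z) -
        ((algebraMap K L b + algebraMap K L d * z) /
          (algebraMap K L a + algebraMap K L c * z)) ^ Fintype.card K =
      algebraMap K L (a * d - b * c) * (z - z ^ Fintype.card K) /
        (algebraMap K L a + algebraMap K L c * z) ^ (Fintype.card K + 1) := by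
  have frob (x y : K) : (algebraMap K L x + algebraMap K L y * z) ^ Fintype.card K =
      algebraMap K L x + algebraMap K L y * z ^ Fintype.card K := by
    change frobeniusAlgHom K L _ = _
    rw [map_add, map_mul, AlgHom.commutes, AlgHom.commutes]
    rfl
  rw [div_pow, div_sub_div _ _ hD (pow_ne_zero _ hD), pow_succ', frob, frob, map_sub, map_mul,
    map_mul]
  congr 1
  ring

/-- For even weight `k = 2m`, `i ≥ 0` and `t = (q-1)k/2 - i(q+1) ≥ 0`, the map
`φ(F) = F(z,1)·(z - z^q)^{i - k/2}` intertwines the twisted symmetric-power action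
`Sym^t(St)[i - k/2]` with the weight-`k` slash action on `F_q(z)`. -/
theorem phi_equivariant_even {F : Type*} [Field F] [Fintype F]
    (k m : ℤ) (hk : k = 2 * m) (i t : ℕ)
    (ht : (t : ℤ) = ((Fintype.card F : ℤ) - 1) * m - (i : ℤ) * ((Fintype.card F : ℤ) + 1))
    (P : MvPolynomial (Fin 2) F) (hP : P.IsHomogeneous t) (γ : GL (Fin 2) F) :
    aeval ![RatFunc.X, (1 : RatFunc F)] (symAct ((i : ℤ) - m) γ P) *
        (RatFunc.X - RatFunc.X ^ (Fintype.card F)) ^ ((i : ℤ) - m) =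
      (RatFunc.C ((γ : Matrix (Fin 2) (Fin 2) F) 0 0) +
          RatFunc.C ((γ : Matrix (Fin 2) (Fin 2) F) 1 0) * RatFunc.X) ^ (-k) *
        RatFunc.eval (algebraMap F (RatFunc F))
          ((RatFunc.C ((γ : Matrix (Fin 2) (Fin 2) F) 0 1) +
              RatFunc.C ((γ : Matrix (Fin 2) (Fin 2) F) 1 1) * RatFunc.X) /
            (RatFunc.C ((γ : Matrix (Fin 2) (Fin 2) F) 0 0) +
              RatFunc.C ((γ : Matrix (Fin 2) (Fin 2) F) 1 0) * RatFunc.X))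
          (aeval ![RatFunc.X, (1 : RatFunc F)] P *
            (RatFunc.X - RatFunc.X ^ (Fintype.card F)) ^ ((i : ℤ) - m)) := by
  set q := Fintype.card F
  set s : ℤ := (i : ℤ) - m
  set a := (γ : Matrix (Fin 2) (Fin 2) F) 0 0
  set b := (γ : Matrix (Fin 2) (Fin 2) F) 0 1
  set c := (γ : Matrix (Fin 2) (Fin 2) F) 1 0
  set d := (γ : Matrix (Fin 2) (Fin 2) F) 1 1
  have hdet : ((Matrix.GeneralLinearGroup.det γ : Fˣ) : F) = a * d - b * c := by
    rw [Matrix.GeneralLinearGroup.val_det_apply, Matrix.det_fin_two]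
  have hdet0 : a * d - b * c ≠ 0 := hdet ▸ Units.ne_zero _
  set D := RatFunc.C a + RatFunc.C c * RatFunc.X
  set w := (RatFunc.C b + RatFunc.C d * RatFunc.X) / D
  have hD : D ≠ 0 := RatFunc.C_add_C_mul_X_ne_zero_of_det_ne_zero hdet0
  have hw : Transcendental F w := RatFunc.transcendental_moebius hdet0
  have hlhs : aeval ![RatFunc.X, (1 : RatFunc F)] (symAct s γ P) =
      RatFunc.C (a * d - b * c) ^ s * (D ^ t * aeval ![w, 1] P) := by
    rw [aeval_symAct, ← hP.aeval_mul_left, Units.val_zpow_eq_zpow_val, hdet, map_zpow₀,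
      RatFunc.algebraMap_eq_C]
    congr 3
    funext j
    fin_cases j
    · simp [w, D, b, d, mul_div_cancel₀ _ hD, add_comm]
    · simp [D, a, c, add_comm]
  have hfrob :
      w - w ^ q = RatFunc.C (a * d - b * c) * (RatFunc.X - RatFunc.X ^ q) / D ^ (q + 1) := by
    simpa only [RatFunc.algebraMap_eq_C] using
      FiniteField.moebius_sub_pow_card (L := RatFunc F) a b c d RatFunc.X
        (by simpa only [RatFunc.algebraMap_eq_C] using hD)
  have hexp : (t : ℤ) = -k - ((q : ℤ) + 1) * s := by rw [ht, hk]; ring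
  rw [hlhs, RatFunc.eval_aeval_mul_zpow_X_sub_X_pow hw, hfrob, div_zpow, mul_zpow, ← zpow_natCast D t, hexp, zpow_sub₀ hD,
    ← zpow_natCast D (q + 1), ← _root_.zpow_mul]
  push_cast
  ring
end

section
/- Let q be a prime power, k an odd integer, i ≥ 0 an integer, and t = ((q−1)k − (q+1))/2 − i(q+1) ≥ 0. Define an F_q-linear map φ from homogeneous polynomials of degree t in X,Y over F_q to F_q(z) by φ(F) = F(z,1)·(z − z^q)^{i − (k−1)/2}. Then for every γ = [[a,b],[c,d]] ∈ GL₂(F_q), φ((ad−bc)^{i−(k−1)/2} F(dX+bY, cX+aY)) = (a+cz)^{-k} · (φF)((b+dz)/(a+cz)). -/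
/-! The Frobenius `z ↦ z ^ q` fixes `F`, so for `w = (b + d z) / (a + c z)` one has
`w - w ^ q = det γ · (z - z ^ q) / (a + c z) ^ (q + 1)`. Evaluating `φ P` at `w` and
dehomogenizing `P(w, 1) = (a + c z) ^ (-t) · P(b + d z, a + c z)` therefore leaves the factor
`(a + c z) ^ (-t - (q + 1) s)`, which is `(a + c z) ^ k` precisely by the relation defining `t`. -/

open Matrix MvPolynomial

theorem MvPolynomial.IsHomogeneous.aeval_smul {σ R S : Type*} [CommSemiring R]
    [CommSemiring S] [Algebra R S] {n : ℕ} {P : MvPolynomial σ R} (hP : P.IsHomogeneous n)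
    (c : S) (x : σ → S) : MvPolynomial.aeval (c • x) P = c ^ n * MvPolynomial.aeval x P := by
  rw [aeval_def, aeval_def, eval₂_eq, eval₂_eq, Finset.mul_sum]
  refine Finset.sum_congr rfl fun d hd => ?_
  have hdeg : ∑ j ∈ d.support, d j = n := by
    simpa [Finsupp.weight_apply, Finsupp.sum] using hP (mem_support_iff.mp hd)
  simp_rw [Pi.smul_apply, smul_eq_mul, mul_pow, Finset.prod_mul_distrib,
    Finset.prod_pow_eq_pow_sum, hdeg]
  ring

theorem MvPolynomial.IsHomogeneous.aeval_div_one {R K : Type*} [CommSemiring R] [Field K]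
    [Algebra R K] {n : ℕ} {P : MvPolynomial (Fin 2) R} (hP : P.IsHomogeneous n) (x : K)
    {y : K} (hy : y ≠ 0) :
    MvPolynomial.aeval ![x / y, 1] P = (y ^ n)⁻¹ * MvPolynomial.aeval ![x, y] P := by
  rw [← inv_pow, ← hP.aeval_smul]
  congr 1
  ext j
  fin_cases j <;> simp [div_eq_inv_mul, hy]

theorem MvPolynomial.comp_aeval_apply_fin_two {R A B : Type*} [CommSemiring R] [CommSemiring A]
    [CommSemiring B] [Algebra R A] [Algebra R B] (φ : A →ₐ[R] B) (x y : A)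
    (P : MvPolynomial (Fin 2) R) : φ (aeval ![x, y] P) = aeval ![φ x, φ y] P := by
  rw [comp_aeval_apply]
  congr 1
  ext j
  fin_cases j <;> simp

theorem aeval_vecCons_one_symAct {A K : Type*} [CommRing A] [CommRing K] [Algebra A K]
    (s : ℤ) (γ : GL (Fin 2) A) (P : MvPolynomial (Fin 2) A) (x : K) :
    aeval ![x, 1] (symAct s γ P) =
      algebraMap A K ((Matrix.GeneralLinearGroup.det γ ^ s : Aˣ) : A) *
        aeval ![algebraMap A K ((γ : Matrix (Fin 2) (Fin 2) A) 0 1) +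
                  algebraMap A K ((γ : Matrix (Fin 2) (Fin 2) A) 1 1) * x,
                algebraMap A K ((γ : Matrix (Fin 2) (Fin 2) A) 0 0) +
                  algebraMap A K ((γ : Matrix (Fin 2) (Fin 2) A) 1 0) * x] P := by
  rw [symAct, map_smul, Algebra.smul_def, comp_aeval_apply]
  congr 2
  ext j
  fin_cases j <;> simp [add_comm, mul_comm]

theorem RatFunc.algebraMap_add_algebraMap_mul_X_ne_zero {K : Type*} [Field K] {a c : K}
    (h : a ≠ 0 ∨ c ≠ 0) :
    algebraMap K (RatFunc K) a + algebraMap K (RatFunc K) c * RatFunc.X ≠ 0 := by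
  have h_poly : algebraMap K (RatFunc K) a + algebraMap K (RatFunc K) c * RatFunc.X =
      algebraMap (Polynomial K) (RatFunc K) (Polynomial.C a + Polynomial.C c * Polynomial.X) := by
    simp [RatFunc.algebraMap_C]
  rw [h_poly]
  refine RatFunc.algebraMap_ne_zero fun h0 => ?_
  have ha := congr_arg (Polynomial.coeff · 0) h0
  have hc := congr_arg (Polynomial.coeff · 1) h0
  simp only [Polynomial.coeff_add, Polynomial.coeff_C_mul_X, Polynomial.coeff_C,
    Polynomial.coeff_zero] at ha hc
  simp_all

theorem RatFunc.X_sub_X_pow_ne_zero {K : Type*} [Field K] {n : ℕ} (hn : 1 < n) :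
    (RatFunc.X - RatFunc.X ^ n : RatFunc K) ≠ 0 := by
  rw [← neg_sub, neg_ne_zero]
  simpa using RatFunc.algebraMap_ne_zero (FiniteField.X_pow_card_sub_X_ne_zero K hn)

universe u

theorem RatFunc.eval_algebraMap_div {K L : Type u} [Field K] [Field L] (f : K →+* L) (x : L)
    (p g : Polynomial K) (hg : g.eval₂ f x ≠ 0) :
    RatFunc.eval f x (algebraMap _ _ p / algebraMap _ _ g) = p.eval₂ f x / g.eval₂ f x := by
  have hg0 : g ≠ 0 := by rintro rfl; simp at hg
  have hdenom : (RatFunc.denom (algebraMap _ _ p / algebraMap _ _ g)).eval₂ f x ≠ 0 :=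
    fun h => hg (Polynomial.eval₂_eq_zero_of_dvd_of_eval₂_eq_zero f x (denom_div_dvd p g) h)
  rw [RatFunc.eval, div_eq_div_iff hdenom hg, ← Polynomial.eval₂_mul, ← Polynomial.eval₂_mul,
    (num_mul_eq_mul_denom_iff hg0).mpr rfl]

theorem RatFunc.eval_algebraMap_mul_zpow {K L : Type u} [Field K] [Field L] (f : K →+* L) (x : L)
    (p g : Polynomial K) (s : ℤ) (hg : g.eval₂ f x ≠ 0) :
    RatFunc.eval f x (algebraMap _ _ p * algebraMap _ _ g ^ s) = p.eval₂ f x * g.eval₂ f x ^ s := by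
  obtain ⟨n, rfl | rfl⟩ := Int.eq_nat_or_neg s
  · rw [zpow_natCast, zpow_natCast, ← map_pow, ← map_mul, RatFunc.eval_algebraMap,
      Algebra.algebraMap_self, RingHom.id_apply, Polynomial.eval₂_mul, Polynomial.eval₂_pow]
  · rw [_root_.zpow_neg, _root_.zpow_neg, zpow_natCast, zpow_natCast, ← map_pow, ← div_eq_mul_inv,
      RatFunc.eval_algebraMap_div _ _ _ _ (by rw [Polynomial.eval₂_pow]; exact pow_ne_zero _ hg),
      Polynomial.eval₂_pow, div_eq_mul_inv]

theorem RatFunc.eval_aeval_mul_X_sub_X_pow_zpow {K L : Type u} [Field K] [Field L] [Algebra K L]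
    (P : MvPolynomial (Fin 2) K) (n : ℕ) (s : ℤ) {x : L} (hx : x - x ^ n ≠ 0) :
    RatFunc.eval (algebraMap K L) x
        (aeval ![RatFunc.X, 1] P * (RatFunc.X - RatFunc.X ^ n) ^ s) =
      aeval ![x, 1] P * (x - x ^ n) ^ s := by
  have hP : aeval ![RatFunc.X, 1] P =
      algebraMap (Polynomial K) (RatFunc K) (aeval ![Polynomial.X, 1] P) := by
    rw [← IsScalarTower.coe_toAlgHom' K, comp_aeval_apply_fin_two]
    simp
  have hX : (RatFunc.X - RatFunc.X ^ n : RatFunc K) =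
      algebraMap (Polynomial K) (RatFunc K) (Polynomial.X - Polynomial.X ^ n) := by
    simp
  rw [hP, hX, RatFunc.eval_algebraMap_mul_zpow _ _ _ _ _ (by simpa using hx),
    ← Polynomial.aeval_def, ← Polynomial.aeval_def, comp_aeval_apply_fin_two]
  simp

theorem FiniteField.mobius_sub_pow_card {F K : Type*} [Field F] [Fintype F] [Field K]
    [Algebra F K] (a b c d : F) (z : K) (hu : algebraMap F K a + algebraMap F K c * z ≠ 0) :
    (algebraMap F K b + algebraMap F K d * z) / (algebraMap F K a + algebraMap F K c * z) -
        ((algebraMap F K b + algebraMap F K d * z) /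
          (algebraMap F K a + algebraMap F K c * z)) ^ Fintype.card F =
      algebraMap F K (a * d - b * c) * (z - z ^ Fintype.card F) /
        (algebraMap F K a + algebraMap F K c * z) ^ (Fintype.card F + 1) := by
  have frobenius (e f : F) :
      (algebraMap F K e + algebraMap F K f * z) ^ Fintype.card F =
        algebraMap F K e + algebraMap F K f * z ^ Fintype.card F := by
    change FiniteField.frobeniusAlgHom F K _ = _
    rw [map_add, map_mul, AlgHom.commutes, AlgHom.commutes]
    rfl
  rw [div_pow, div_sub_div _ _ hu (pow_ne_zero _ hu), ← pow_succ']
  congr 1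
  rw [frobenius, frobenius, map_sub, map_mul, map_mul]
  ring

/-- For odd weight `k = 2m+1`, `i ≥ 0` and `t = ((q-1)k - (q+1))/2 - i(q+1) ≥ 0`, the map
`φ(F) = F(z,1)·(z - z^q)^{i - (k-1)/2}` intertwines the twisted symmetric-power action
`Sym^t(St)[i - (k-1)/2]` with the weight-`k` slash action on `F_q(z)`. -/
theorem phi_equivariant_odd {F : Type*} [Field F] [Fintype F]
    (k m : ℤ) (hk : k = 2 * m + 1) (i t : ℕ)
    (ht : 2 * (t : ℤ) = ((Fintype.card F : ℤ) - 1) * k - ((Fintype.card F : ℤ) + 1) - 2 * (i : ℤ) * ((Fintype.card F : ℤ) + 1))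
    (P : MvPolynomial (Fin 2) F) (hP : P.IsHomogeneous t) (γ : GL (Fin 2) F) :
    aeval ![RatFunc.X, (1 : RatFunc F)] (symAct ((i : ℤ) - m) γ P) *
        (RatFunc.X - RatFunc.X ^ (Fintype.card F)) ^ ((i : ℤ) - m) =
      (RatFunc.C ((γ : Matrix (Fin 2) (Fin 2) F) 0 0) +
          RatFunc.C ((γ : Matrix (Fin 2) (Fin 2) F) 1 0) * RatFunc.X) ^ (-k) *
        RatFunc.eval (algebraMap F (RatFunc F))
          ((RatFunc.C ((γ : Matrix (Fin 2) (Fin 2) F) 0 1) +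
              RatFunc.C ((γ : Matrix (Fin 2) (Fin 2) F) 1 1) * RatFunc.X) /
            (RatFunc.C ((γ : Matrix (Fin 2) (Fin 2) F) 0 0) +
              RatFunc.C ((γ : Matrix (Fin 2) (Fin 2) F) 1 0) * RatFunc.X))
          (aeval ![RatFunc.X, (1 : RatFunc F)] P *
            (RatFunc.X - RatFunc.X ^ (Fintype.card F)) ^ ((i : ℤ) - m)) := by
  set q := Fintype.card F
  set s := (i : ℤ) - m
  set M := (γ : Matrix (Fin 2) (Fin 2) F)
  simp only [← RatFunc.algebraMap_eq_C, aeval_vecCons_one_symAct]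
  set u := algebraMap F (RatFunc F) (M 0 0) + algebraMap F (RatFunc F) (M 1 0) * RatFunc.X
  set B := algebraMap F (RatFunc F) (M 0 1) + algebraMap F (RatFunc F) (M 1 1) * RatFunc.X
  have hdet : ((Matrix.GeneralLinearGroup.det γ : Fˣ) : F) = M 0 0 * M 1 1 - M 0 1 * M 1 0 := by
    rw [Matrix.GeneralLinearGroup.val_det_apply, Matrix.det_fin_two]
  have hdet0 : M 0 0 * M 1 1 - M 0 1 * M 1 0 ≠ 0 := hdet ▸ Units.ne_zero _
  have hu : u ≠ 0 := RatFunc.algebraMap_add_algebraMap_mul_X_ne_zero <| by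
    contrapose! hdet0
    simp [hdet0]
  have hmobius : B / u - (B / u) ^ q = algebraMap F (RatFunc F) (M 0 0 * M 1 1 - M 0 1 * M 1 0) *
      (RatFunc.X - RatFunc.X ^ q) / u ^ (q + 1) :=
    FiniteField.mobius_sub_pow_card (M 0 0) (M 0 1) (M 1 0) (M 1 1) RatFunc.X hu
  have hw : B / u - (B / u) ^ q ≠ 0 := by
    rw [hmobius]
    exact div_ne_zero (mul_ne_zero ((map_ne_zero _).mpr hdet0)
      (RatFunc.X_sub_X_pow_ne_zero Fintype.one_lt_card)) (pow_ne_zero _ hu)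
  have hexp : -k = t + (q + 1) * s :=
    mul_left_cancel₀ two_ne_zero (by linear_combination -ht - (q + 1) * hk)
  have hpow : u ^ ((q + 1 : ℤ) * s) = (u ^ (q + 1)) ^ s := by
    rw [_root_.zpow_mul]
    norm_cast
  rw [RatFunc.eval_aeval_mul_X_sub_X_pow_zpow P q s hw, hP.aeval_div_one B hu, hmobius, hexp,
    Units.val_zpow_eq_zpow_val, hdet, map_zpow₀, zpow_add₀ hu, hpow, zpow_natCast, div_zpow,
    mul_zpow]
  field_simp
end

section
/- Let R be a commutative ring, a ∈ R, ∂ = d/dz and D_a = (z−a)∂ on R[z]. Then for every n ≥ 0 and every f ∈ R[z], ∂^n((z−a)^n · f) = (D_a + n)(D_a + n − 1)⋯(D_a + 1) f. -/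
open Polynomial

/-- The operator `D_a = (z - a)·∂` on `R[z]`. -/
noncomputable def Da {R : Type*} [CommRing R] (a : R) (f : Polynomial R) : Polynomial R :=
  (X - C a) * derivative f

/-- The rising product `(D_a + n)(D_a + n - 1)⋯(D_a + 1)` applied to `f`
(the factor `D_a + n` is applied first at recursion depth `n`, all factors commute). -/
noncomputable def riseProd {R : Type*} [CommRing R] (a : R) : ℕ → Polynomial R → Polynomial R
  | 0, f => f
  | n + 1, f => riseProd a n (Da a f + (n + 1) • f)

/-- For every `n ≥ 0` and `f ∈ R[z]`:
`∂^n((z - a)^n · f) = (D_a + n)(D_a + n - 1)⋯(D_a + 1) f`. -/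
theorem derivative_pow_mul_eq_riseProd {R : Type*} [CommRing R] (a : R) (n : ℕ)
    (f : Polynomial R) :
    (⇑(derivative (R := R)))^[n] ((X - C a) ^ n * f) = riseProd a n f := by
  induction n generalizing f with
  | zero => simp [riseProd]
  | succ n ih =>
    rw [Function.iterate_succ_apply]
    have h : derivative ((X - C a) ^ (n + 1) * f)
        = (X - C a) ^ n * (Da a f + (n + 1) • f) := by
      rw [derivative_mul, derivative_pow, Da]
      simp only [derivative_sub, derivative_X, derivative_C, sub_zero, mul_one,
        nsmul_eq_mul]
      simp only [C_add, C_1, map_natCast C, Nat.add_sub_cancel, Nat.add_sub_cancel_left]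
      ring
    rw [h, ih, riseProd]
end

section
/- Let T be a finite tree (finite connected acyclic simple graph) with vertex set V and edge set E, let F be a field, and for each v ∈ V let M_v be an F-vector space and for each edge e = {u,v} let N_e be an F-vector space with surjective linear maps r_{v,e}: M_v → N_e for each endpoint v of e. Fix an orientation of each edge e (a choice of endpoints s(e), t(e)). Then the linear map ∏_{v∈V} M_v → ∏_{e∈E} N_e sending (m_v)_v to (r_{s(e),e}(m_{s(e)}) − r_{t(e),e}(m_{t(e)}))_e is surjective. -/
/-!
Induct on the set `S` of edges at which `cechDiff m = n` is imposed, keeping the freedom to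
prescribe `m` at one vertex `a`. When an edge `e₀` is added, its endpoints lie in different
components of the forest spanned by `S` (every edge of a forest is a bridge), so one endpoint `u`
is not connected to `a`. Solve again with the value at `u` chosen, by surjectivity of the
restriction to `e₀`, to satisfy the equation at `e₀`, and use this solution on the component
of `u` and the old one elsewhere.
-/

open Function

namespace SimpleGraph

variable {V : Type*} {G : SimpleGraph V} {M : V → Type*} {N : G.edgeSet → Type*}
  [∀ e, AddGroup (N e)] {src tgt : G.edgeSet → V}

variable (src tgt) in
def cechDiff (r : ∀ (e : G.edgeSet) (v : V), M v → N e) (m : ∀ v, M v) (e : G.edgeSet) :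
    N e :=
  r e (src e) (m (src e)) - r e (tgt e) (m (tgt e))

variable {r : ∀ (e : G.edgeSet) (v : V), M v → N e}

lemma cechDiff_congr {m m' : ∀ v, M v} {e : G.edgeSet} (hs : m (src e) = m' (src e))
    (ht : m (tgt e) = m' (tgt e)) :
    cechDiff src tgt r m e = cechDiff src tgt r m' e := by
  simp only [cechDiff, hs, ht]

lemma cechDiff_piecewise_of_iff (C : Set V) [∀ v, Decidable (v ∈ C)] (m₁ m₂ : ∀ v, M v)
    {e : G.edgeSet} (he : src e ∈ C ↔ tgt e ∈ C) :
    cechDiff src tgt r (C.piecewise m₂ m₁) e =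
      if src e ∈ C then cechDiff src tgt r m₂ e else cechDiff src tgt r m₁ e := by
  split_ifs with hs
  · exact cechDiff_congr (C.piecewise_eq_of_mem _ _ hs) (C.piecewise_eq_of_mem _ _ (he.1 hs))
  · exact cechDiff_congr (C.piecewise_eq_of_notMem _ _ hs)
      (C.piecewise_eq_of_notMem _ _ (mt he.2 hs))

lemma exists_cechDiff_update_eq [DecidableEq V] {e : G.edgeSet}
    (hsrc : Surjective (r e (src e))) (htgt : Surjective (r e (tgt e)))
    (hne : src e ≠ tgt e) {u : V} (hu : u = src e ∨ u = tgt e) (m : ∀ v, M v) (w : N e) :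
    ∃ y : M u, cechDiff src tgt r (update m u y) e = w := by
  rcases hu with rfl | rfl
  · obtain ⟨y, hy⟩ := hsrc (w + r e (tgt e) (m (tgt e)))
    exact ⟨y, by simp [cechDiff, update_of_ne hne.symm, hy]⟩
  · obtain ⟨y, hy⟩ := htgt (-w + r e (src e) (m (src e)))
    exact ⟨y, by simp [cechDiff, update_of_ne hne, hy]⟩

lemma adj_deleteEdges_compl_of_mem (hst : ∀ e : G.edgeSet, (e : Sym2 V) = s(src e, tgt e))
    {S : Set G.edgeSet} {e : G.edgeSet} (he : e ∈ S) :
    (G.deleteEdges ((↑) '' Sᶜ)).Adj (src e) (tgt e) := by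
  rw [deleteEdges_adj, ← mem_edgeSet, ← hst]
  exact ⟨e.2, fun ⟨e', he', h⟩ => he' (Subtype.ext h ▸ he)⟩

lemma IsAcyclic.not_reachable_deleteEdges_compl_of_notMem (hA : G.IsAcyclic)
    (hst : ∀ e : G.edgeSet, (e : Sym2 V) = s(src e, tgt e))
    {S : Set G.edgeSet} {e : G.edgeSet} (he : e ∉ S) :
    ¬ (G.deleteEdges ((↑) '' Sᶜ)).Reachable (src e) (tgt e) := by
  have hbridge : G.IsBridge s(src e, tgt e) := hst e ▸ isAcyclic_iff_forall_isBridge.1 hA e.2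
  rw [isBridge_iff, ← hst] at hbridge
  exact fun h => hbridge (h.mono (deleteEdges_anti (by simpa using he)))

lemma IsAcyclic.exists_cechDiff_eq_on (hA : G.IsAcyclic)
    (hst : ∀ e : G.edgeSet, (e : Sym2 V) = s(src e, tgt e))
    (hsrc : ∀ e, Surjective (r e (src e))) (htgt : ∀ e, Surjective (r e (tgt e)))
    (n : ∀ e, N e) (S : Finset G.edgeSet) (m₀ : ∀ v, M v) (a : V) :
    ∃ m : ∀ v, M v, m a = m₀ a ∧ ∀ e ∈ S, cechDiff src tgt r m e = n e := by
  classical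
  induction S using Finset.induction_on generalizing m₀ a with
  | empty => exact ⟨m₀, rfl, by simp⟩
  | @insert e₀ S he₀ ih =>
    set H := G.deleteEdges ((↑) '' (S : Set G.edgeSet)ᶜ)
    have hsep : ¬ H.Reachable (src e₀) (tgt e₀) :=
      hA.not_reachable_deleteEdges_compl_of_notMem hst (S := S) he₀
    obtain ⟨u, hu, hua⟩ : ∃ u, (u = src e₀ ∨ u = tgt e₀) ∧ ¬ H.Reachable u a := by
      by_cases h : H.Reachable (src e₀) a
      · exact ⟨tgt e₀, Or.inr rfl, fun h' => hsep (h.trans h'.symm)⟩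
      · exact ⟨src e₀, Or.inl rfl, h⟩
    obtain ⟨m₁, hm₁a, hm₁⟩ := ih m₀ a
    obtain ⟨y, hy⟩ := exists_cechDiff_update_eq (hsrc e₀) (htgt e₀)
      (fun h => hsep (h ▸ Reachable.refl _)) hu m₁ (n e₀)
    obtain ⟨m₂, hm₂u, hm₂⟩ := ih (update m₁ u y) u
    set C := {v | H.Reachable u v}
    have hC : ∀ e ∈ S, (src e ∈ C ↔ tgt e ∈ C) := fun e he =>
      have hadj := adj_deleteEdges_compl_of_mem hst (Finset.mem_coe.2 he)
      ⟨fun h => h.trans hadj.reachable, fun h => h.trans hadj.symm.reachable⟩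
    have hagree : ∀ v, (v = src e₀ ∨ v = tgt e₀) →
        C.piecewise m₂ m₁ v = update m₁ u y v := by
      intro v hv
      by_cases hvu : v = u
      · subst hvu
        exact (C.piecewise_eq_of_mem _ _ (Reachable.refl v)).trans hm₂u
      · have hvC : v ∉ C := by
          rcases hu with rfl | rfl <;> rcases hv with rfl | rfl
          exacts [(hvu rfl).elim, hsep, fun h => hsep h.symm, (hvu rfl).elim]
        rw [C.piecewise_eq_of_notMem _ _ hvC, update_of_ne hvu]
    refine ⟨C.piecewise m₂ m₁, by rw [C.piecewise_eq_of_notMem _ _ hua, hm₁a], ?_⟩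
    intro e he
    rcases Finset.mem_insert.1 he with rfl | he
    · rw [← hy]
      exact cechDiff_congr (hagree _ (Or.inl rfl)) (hagree _ (Or.inr rfl))
    · rw [cechDiff_piecewise_of_iff C m₁ m₂ (hC e he), hm₁ e he, hm₂ e he, ite_self]

theorem IsAcyclic.cechDiff_surjective [Finite G.edgeSet] [Nonempty (∀ v, M v)]
    (hA : G.IsAcyclic) (hst : ∀ e : G.edgeSet, (e : Sym2 V) = s(src e, tgt e))
    (hsrc : ∀ e, Surjective (r e (src e))) (htgt : ∀ e, Surjective (r e (tgt e))) :
    Surjective (cechDiff src tgt r) := by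
  intro n
  have := Fintype.ofFinite G.edgeSet
  obtain ⟨m₀⟩ := ‹Nonempty (∀ v, M v)›
  rcases isEmpty_or_nonempty V with hV | ⟨⟨a⟩⟩
  · exact ⟨m₀, funext fun e => isEmptyElim (src e)⟩
  obtain ⟨m, -, hm⟩ := hA.exists_cechDiff_eq_on hst hsrc htgt n Finset.univ m₀ a
  exact ⟨m, funext fun e => hm e (Finset.mem_univ e)⟩

end SimpleGraph

/-- Let `T` be a finite tree with vector spaces `M v` at the vertices and `N e` at the
edges, together with surjective linear restriction maps `M v → N e` for each endpoint
`v` of each edge `e` (here each edge `e` comes with an orientation `src e, tgt e`).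
Then the Čech differential `∏_v M v → ∏_e N e`,
`(m_v)_v ↦ (r_{src e}(m_{src e}) - r_{tgt e}(m_{tgt e}))_e`, is surjective. -/
theorem tree_cech_surjective {V : Type*} [Fintype V] (G : SimpleGraph V)
    (hT : G.IsTree) (F : Type*) [Field F]
    (M : V → Type*) [∀ v, AddCommGroup (M v)] [∀ v, Module F (M v)]
    (N : G.edgeSet → Type*) [∀ e, AddCommGroup (N e)] [∀ e, Module F (N e)]
    (src tgt : G.edgeSet → V)
    (hst : ∀ e : G.edgeSet, (e : Sym2 V) = Sym2.mk (src e) (tgt e))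
    (r : ∀ (e : G.edgeSet) (v : V), M v →ₗ[F] N e)
    (hsrc : ∀ e, Function.Surjective (r e (src e)))
    (htgt : ∀ e, Function.Surjective (r e (tgt e))) :
    Function.Surjective (fun m : (∀ v, M v) => fun e : G.edgeSet =>
      r e (src e) (m (src e)) - r e (tgt e) (m (tgt e))) :=
  hT.isAcyclic.cechDiff_surjective (r := fun e v => r e v) hst hsrc htgt
end

section
/- Let O be a discrete valuation ring with uniformizer π, and suppose π = π̂² for some π̂ in a quadratic extension O' of O (i.e. O' is a DVR with uniformizer π̂ and π̂² = π). In the ring A = O'[X,Y]/(XY − π), the ideal I = (X, π̂) is not a principal ideal. -/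
/-!
Setting `Y = 0` maps `A` onto `(O/π̂²)[X]` and carries `I` onto `(X, π̂)`, so it suffices that
`(X, c)` is not principal in `R[X]` for a local ring `R` and a nonzero non-unit `c` (here `π̂`,
which is nonzero and nilpotent in `O/π̂²`). If `g` generated it, write `X = g q`: the linear
coefficient gives `1 = g(0) q(1) + g(1) q(0)`, where `g(0) ∈ (c)` is not a unit, so `q(0)` is a
unit; the constant coefficient `g(0) q(0) = 0` then gives `g(0) = 0`, and `g ∣ c` forces `c = 0`.
-/

open MvPolynomial

theorem Polynomial.not_isPrincipal_span_X_C {R : Type*} [CommRing R] [IsLocalRing R] {c : R}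
    (hc0 : c ≠ 0) (hc : ¬IsUnit c) :
    ¬(Ideal.span {Polynomial.X, Polynomial.C c} : Ideal (Polynomial R)).IsPrincipal := by
  rintro ⟨g, hg⟩
  rw [Ideal.submodule_span_eq] at hg
  have hmem : ∀ p ∈ ({Polynomial.X, Polynomial.C c} : Set (Polynomial R)), g ∣ p := fun p hp =>
    Ideal.mem_span_singleton.mp (hg ▸ Ideal.subset_span hp)
  obtain ⟨q, hq⟩ := hmem _ (Set.mem_insert _ _)
  obtain ⟨h, hh⟩ := hmem _ (Set.mem_insert_of_mem _ rfl)
  obtain ⟨u, v, huv⟩ := Ideal.mem_span_pair.mp (hg ▸ Ideal.mem_span_singleton_self g)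
  have hg₀ : g.coeff 0 = v.coeff 0 * c := by
    simpa [Polynomial.mul_coeff_zero] using congrArg (Polynomial.coeff · 0) huv.symm
  have hq₀ : g.coeff 0 * q.coeff 0 = 0 := by
    simpa [Polynomial.mul_coeff_zero] using congrArg (Polynomial.coeff · 0) hq.symm
  have hq₁ : g.coeff 0 * q.coeff 1 + g.coeff 1 * q.coeff 0 = 1 := by
    simpa [Polynomial.coeff_mul, Finset.Nat.antidiagonal_succ] using
      congrArg (Polynomial.coeff · 1) hq.symm
  have hq₀_unit : IsUnit (q.coeff 0) := by
    refine isUnit_of_mul_isUnit_right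
      ((IsLocalRing.isUnit_or_isUnit_of_add_one hq₁).resolve_left fun hu => hc ?_)
    exact isUnit_of_mul_isUnit_right (hg₀ ▸ isUnit_of_mul_isUnit_left hu)
  apply hc0
  simpa [Polynomial.mul_coeff_zero, hq₀_unit.mul_left_eq_zero.mp hq₀] using
    congrArg (Polynomial.coeff · 0) hh

section SquareQuotient

variable {O : Type*} [CommRing O] {p : O}

theorem Ideal.Quotient.mk_ne_zero_span_sq [IsDomain O] (hp₀ : p ≠ 0) (hp : ¬IsUnit p) :
    Ideal.Quotient.mk (Ideal.span {p ^ 2}) p ≠ 0 := by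
  rw [Ne, Ideal.Quotient.eq_zero_iff_mem, Ideal.mem_span_singleton]
  exact fun h => absurd ((pow_dvd_pow_iff hp₀ hp).mp (h.trans (pow_one p).symm.dvd))
    (by norm_num)

theorem Ideal.Quotient.isNilpotent_mk_span_sq :
    IsNilpotent (Ideal.Quotient.mk (Ideal.span {p ^ 2}) p) :=
  ⟨2, by rw [← map_pow, Ideal.Quotient.eq_zero_iff_mem]; exact Ideal.mem_span_singleton_self _⟩

end SquareQuotient

section SetYZero

variable {O : Type*} [CommRing O]

noncomputable def setYZero (t : O) :
    MvPolynomial (Fin 2) O ⧸ Ideal.span {X 0 * X 1 - C t} →+*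
      Polynomial (O ⧸ Ideal.span {t}) :=
  Ideal.Quotient.lift _
    (eval₂Hom (Polynomial.C.comp (Ideal.Quotient.mk _)) ![Polynomial.X, 0]) <| by
      intro a ha
      obtain ⟨b, rfl⟩ := Ideal.mem_span_singleton'.mp ha
      simp [Ideal.Quotient.eq_zero_iff_mem.mpr (Ideal.mem_span_singleton_self t)]

@[simp]
theorem setYZero_mk_X_zero (t : O) :
    setYZero t (Ideal.Quotient.mk _ (X 0)) = Polynomial.X := by
  simp [setYZero]

@[simp]
theorem setYZero_mk_C (t a : O) :
    setYZero t (Ideal.Quotient.mk _ (C a)) = Polynomial.C (Ideal.Quotient.mk _ a) := by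
  simp [setYZero]

end SetYZero

/-- In `A = O'[X,Y]/(XY - π)`, where `O'` is a discrete valuation ring with
uniformizer `π̂` and `π = π̂²`, the ideal `I = (X, π̂)` is not principal. -/
theorem ideal_X_pi_not_principal {O : Type*} [CommRing O] [IsDomain O]
    [IsDiscreteValuationRing O] (πh : O) (hπ : Irreducible πh) :
    ¬ (Ideal.span
        ({Ideal.Quotient.mk
            (Ideal.span {(X 0 * X 1 - C (πh ^ 2) : MvPolynomial (Fin 2) O)}) (X 0),
          Ideal.Quotient.mk
            (Ideal.span {(X 0 * X 1 - C (πh ^ 2) : MvPolynomial (Fin 2) O)}) (C πh)} :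
          Set (MvPolynomial (Fin 2) O ⧸
            Ideal.span {(X 0 * X 1 - C (πh ^ 2) : MvPolynomial (Fin 2) O)}))).IsPrincipal := by
  intro hI
  have hc₀ := Ideal.Quotient.mk_ne_zero_span_sq hπ.ne_zero hπ.not_isUnit
  have : Nontrivial (O ⧸ Ideal.span {πh ^ 2}) := ⟨⟨_, _, hc₀⟩⟩
  have : IsLocalRing (O ⧸ Ideal.span {πh ^ 2}) := .of_surjective' _ Ideal.Quotient.mk_surjective
  refine Polynomial.not_isPrincipal_span_X_C hc₀
    Ideal.Quotient.isNilpotent_mk_span_sq.not_isUnit ?_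
  rw [← setYZero_mk_X_zero (πh ^ 2), ← setYZero_mk_C, ← Set.image_pair, ← Ideal.map_span]
  infer_instance
end
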